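/- If the reference contravariant metric ā^{αβ} is positive definite and 0 ≤ ν < 1, then the quadratic form ε ↦ H^{αβλδ} ε_{αβ} ε_{λδ} (Einstein summation over α,β,λ,δ ∈ {1,2}) is nonnegative on symmetric 2×2 tensors ε, and it is positive definite when additionally ν ≥ 0. -/

import Mathlib

open scoped BigOperators

/-- The elasticity tensor of the Kirchhoff-Love shell. -/
noncomputable def elasticityTensor (A : Matrix (Fin 2) (Fin 2) ℝ) (ν : ℝ) (α β l d : Fin 2) : ℝ :=
  ν * A α β * A l d + (1 / 2) * (1 - ν) * (A α l * A β d + A α d * A β l)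

/-- The quadratic form `ε ↦ H^{αβλδ} ε_{αβ} ε_{λδ}` (Einstein summation). -/
noncomputable def elasticityQuadForm (A : Matrix (Fin 2) (Fin 2) ℝ) (ν : ℝ)
    (ε : Matrix (Fin 2) (Fin 2) ℝ) : ℝ :=
  ∑ α, ∑ β, ∑ l, ∑ d, elasticityTensor A ν α β l d * ε α β * ε l d

/-!
With `A` and `ε` symmetric, `H(ε, ε) = ν (tr Aε)² + (1 - ν) tr(AεAε)`. Factor the positive
definite `A` as `Bᴴ B` with `B` invertible; then `tr(AεAε) = ‖B ε Bᴴ‖²` (Frobenius norm),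
which is positive for `ε ≠ 0`. For `0 ≤ ν < 1` both terms are then nonnegative and the second
is positive.
-/

open Matrix

open scoped ComplexOrder MatrixOrder in
theorem Matrix.PosDef.trace_mul_mul_mul_pos {𝕜 n : Type*} [RCLike 𝕜] [Fintype n] [DecidableEq n]
    {A ε : Matrix n n 𝕜} (hA : A.PosDef) (hε : ε.IsHermitian) (hε0 : ε ≠ 0) :
    0 < (A * ε * A * ε).trace := by
  obtain ⟨B, hB, rfl⟩ :=
    CStarAlgebra.isStrictlyPositive_iff_eq_star_mul_self.mp hA.isStrictlyPositive
  set M := B * ε * Bᴴ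
  have htrace : (star B * B * ε * (star B * B) * ε).trace = (Mᴴ * M).trace := by
    simp only [M, star_eq_conjTranspose, conjTranspose_mul, conjTranspose_conjTranspose, hε.eq,
      Matrix.mul_assoc]
    rw [trace_mul_comm]
    simp only [Matrix.mul_assoc]
  have hM0 : M ≠ 0 := by
    have hB_star : IsUnit Bᴴ := hB.star
    rwa [Ne, hB_star.mul_left_eq_zero, hB.mul_right_eq_zero]
  rw [htrace]
  exact (posSemidef_conjTranspose_mul_self M).trace_nonneg.lt_of_ne
    (Ne.symm (trace_conjTranspose_mul_self_eq_zero_iff.not.mpr hM0))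

theorem elasticityQuadForm_eq_trace {A ε : Matrix (Fin 2) (Fin 2) ℝ} (hA : A.IsSymm)
    (hε : ε.IsSymm) (ν : ℝ) :
    elasticityQuadForm A ν ε = ν * (A * ε).trace ^ 2 + (1 - ν) * (A * ε * A * ε).trace := by
  have hA10 : A 1 0 = A 0 1 := hA.apply 0 1
  have hε10 : ε 1 0 = ε 0 1 := hε.apply 0 1
  simp only [elasticityQuadForm, elasticityTensor, trace, diag, mul_apply, Fin.sum_univ_two,
    hA10, hε10]
  ring

/-- if `[ā^{αβ}]` is positive definite and `0 ≤ ν < 1`, the quadratic form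
induced by `H` is nonnegative on symmetric 2×2 tensors, and positive definite. -/
theorem elasticityQuadForm_posDef
    (A : Matrix (Fin 2) (Fin 2) ℝ) (hA : A.PosDef)
    (ν : ℝ) (hν0 : 0 ≤ ν) (hν1 : ν < 1)
    (ε : Matrix (Fin 2) (Fin 2) ℝ) (hεsymm : ∀ α β, ε α β = ε β α) :
    0 ≤ elasticityQuadForm A ν ε ∧ (ε ≠ 0 → 0 < elasticityQuadForm A ν ε) := by
  have hε : ε.IsSymm := IsSymm.ext fun α β => hεsymm β α
  have hA_symm : A.IsSymm := isHermitian_iff_isSymm.mp hA.isHermitian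
  have hpos (hε0 : ε ≠ 0) : 0 < elasticityQuadForm A ν ε := by
    have htrace := hA.trace_mul_mul_mul_pos (isHermitian_iff_isSymm.mpr hε) hε0
    rw [elasticityQuadForm_eq_trace hA_symm hε]
    have h1ν : 0 < 1 - ν := sub_pos.mpr hν1
    positivity
  refine ⟨?_, hpos⟩
  rcases eq_or_ne ε 0 with rfl | hε0
  · simp [elasticityQuadForm]
  · exact (hpos hε0).le
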